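/- arXiv:1310.5534 — 2 statements merged into one kernel-verified Lean document; each statement's English description precedes it below -/
import Mathlib

section
/- Let each car i pay the congestion tax p_i^c(z,x) = aβ·Σ_{ℓ=1}^{m_{z_i}(x)} g(ℓ), so that U_i(z,x) = ξ_i^c(z_i) + (a·n_{z_i}(z,x)+b) + aβ·Σ_{ℓ=1}^{m_{z_i}(x)} g(ℓ), while trucks have utility V_j(x,z) = ξ_j^t(x_j) + (a·n_{x_j}(z,x)+b) + β(a·n_{x_j}(z,x)+b)·g(m_{x_j}(x)). Then the function Φ(x,z) = Σ_i ξ_i^c(z_i) + Σ_j ξ_j^t(x_j) + Σ_{r∈R} Σ_{k=1}^{n_r(x,z)}(ak+b) + Σ_{r∈R} β(a·n_r(x,z)+b)·Σ_{ℓ=1}^{m_r(x)} g(ℓ) − aβ·Σ_{r∈R} Σ_{ℓ=1}^{m_r(x)} Σ_{k=1}^{ℓ−1} g(k) is an exact potential function for the game. -/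
/-- `n_r(z,x)`: total number of vehicles using interval `r`. -/
def nCount {R : Type*} [DecidableEq R] {N M : ℕ}
    (z : Fin N → R) (x : Fin M → R) (r : R) : ℕ :=
  (Finset.univ.filter fun ℓ => z ℓ = r).card + (Finset.univ.filter fun ℓ => x ℓ = r).card

/-- `m_r(x)`: number of trucks using interval `r`. -/
def mCount {R : Type*} [DecidableEq R] {M : ℕ} (x : Fin M → R) (r : R) : ℕ :=
  (Finset.univ.filter fun ℓ => x ℓ = r).card

/-- Car utility with the congestion tax `p_i^c(z,x) = aβ·Σ_{ℓ=1}^{m_{z_i}(x)} g(ℓ)`: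
`U_i(z,x) = ξ_i^c(z_i) + (a·n_{z_i}(z,x)+b) + aβ·Σ_{ℓ=1}^{m_{z_i}(x)} g(ℓ)`. -/
def carUtax {R : Type*} [DecidableEq R] {N M : ℕ} (a b β : ℝ) (g : ℕ → ℝ)
    (ξc : Fin N → R → ℝ) (i : Fin N) (z : Fin N → R) (x : Fin M → R) : ℝ :=
  ξc i (z i) + (a * (nCount z x (z i) : ℝ) + b)
    + a * β * ∑ ℓ ∈ Finset.Icc 1 (mCount x (z i)), g ℓ

/-- Truck utility `V_j(x,z) = ξ_j^t(x_j) + (a·n_{x_j}(z,x)+b)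
+ β(a·n_{x_j}(z,x)+b)·g(m_{x_j}(x))`. -/
def truckU {R : Type*} [DecidableEq R] {N M : ℕ} (a b β : ℝ) (g : ℕ → ℝ)
    (ξt : Fin M → R → ℝ) (j : Fin M) (x : Fin M → R) (z : Fin N → R) : ℝ :=
  ξt j (x j) + (a * (nCount z x (x j) : ℝ) + b)
    + β * (a * (nCount z x (x j) : ℝ) + b) * g (mCount x (x j))

/-- The candidate potential function of Theorem 1. -/
def Phi {R : Type*} [Fintype R] [DecidableEq R] {N M : ℕ} (a b β : ℝ) (g : ℕ → ℝ)
    (ξc : Fin N → R → ℝ) (ξt : Fin M → R → ℝ)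
    (x : Fin M → R) (z : Fin N → R) : ℝ :=
  (∑ i, ξc i (z i)) + (∑ j, ξt j (x j))
    + (∑ r : R, ∑ k ∈ Finset.Icc 1 (nCount z x r), (a * (k : ℝ) + b))
    + (∑ r : R, β * (a * (nCount z x r : ℝ) + b) * ∑ ℓ ∈ Finset.Icc 1 (mCount x r), g ℓ)
    - a * β * ∑ r : R, ∑ ℓ ∈ Finset.Icc 1 (mCount x r), ∑ k ∈ Finset.Icc 1 (ℓ - 1), g k

/-!
`Phi` is `∑ ξc + ∑ ξt + ∑_r ψ(n_r, m_r)` with `ψ = intervalPotential`. Singling out one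
player, the sum over intervals splits as in Rosenthal's argument into the same sum over the loads
of the other players, which does not see the player's choice, plus the marginal increment of `ψ`
at the player's own interval. A car raises `n` by one, a truck raises both `n` and `m` by one, and
these two increments of `ψ` are exactly the congestion parts of `U_i` and `V_j`.
-/

open Finset

section Counting

variable {α R : Type*} [Fintype α] [DecidableEq α]

theorem card_filter_eq_card_filter_erase_add [DecidableEq R] (s : α → R) (i : α) (r : R) :
    #{ℓ | s ℓ = r} = #{ℓ ∈ univ.erase i | s ℓ = r} + if s i = r then 1 else 0 := by
  rw [card_filter, card_filter, ← sum_erase_add _ _ (mem_univ i)]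

theorem filter_erase_update_eq [DecidableEq R] (s : α → R) (i : α) (c r : R) :
    {ℓ ∈ univ.erase i | Function.update s i c ℓ = r} = {ℓ ∈ univ.erase i | s ℓ = r} :=
  filter_congr fun _ hℓ => by rw [Function.update_of_ne (ne_of_mem_erase hℓ)]

theorem sum_erase_update_eq {G : Type*} [AddCommMonoid G] (f : α → R → G) (s : α → R) (i : α)
    (c : R) : ∑ ℓ ∈ univ.erase i, f ℓ (Function.update s i c ℓ) = ∑ ℓ ∈ univ.erase i, f ℓ (s ℓ) :=
  sum_congr rfl fun _ hℓ => by rw [Function.update_of_ne (ne_of_mem_erase hℓ)]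

theorem sum_apply_card_filter_eq_add [Fintype R] [DecidableEq R] {G : Type*} [AddCommGroup G]
    (F : R → ℕ → G) (s : α → R) (i : α) :
    ∑ r, F r #{ℓ | s ℓ = r} = ∑ r, F r #{ℓ ∈ univ.erase i | s ℓ = r}
      + (F (s i) (#{ℓ ∈ univ.erase i | s ℓ = s i} + 1)
        - F (s i) #{ℓ ∈ univ.erase i | s ℓ = s i}) := by
  simp only [card_filter_eq_card_filter_erase_add s i]
  rw [← sub_eq_iff_eq_add', ← sum_sub_distrib, sum_eq_single (s i)]
  · simp
  · intro r _ hr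
    simp [Ne.symm hr]
  · simp

end Counting

section CarTruckGame

variable {R : Type*} [DecidableEq R] {N M : ℕ} (a b β : ℝ) (g : ℕ → ℝ)

/-- The contribution of one interval with `n` vehicles, `m` of them trucks, to `Phi`. -/
def intervalPotential (n m : ℕ) : ℝ :=
  ∑ k ∈ Icc 1 n, (a * (k : ℝ) + b) + β * (a * (n : ℝ) + b) * ∑ ℓ ∈ Icc 1 m, g ℓ
    - a * β * ∑ ℓ ∈ Icc 1 m, ∑ k ∈ Icc 1 (ℓ - 1), g k

theorem intervalPotential_succ_left (n m : ℕ) :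
    intervalPotential a b β g (n + 1) m = intervalPotential a b β g n m
      + (a * ((n + 1 : ℕ) : ℝ) + b) + a * β * ∑ ℓ ∈ Icc 1 m, g ℓ := by
  unfold intervalPotential
  rw [sum_Icc_succ_top (by omega)]
  push_cast
  ring

theorem intervalPotential_succ_succ (n m : ℕ) :
    intervalPotential a b β g (n + 1) (m + 1) = intervalPotential a b β g n m
      + (a * ((n + 1 : ℕ) : ℝ) + b) + β * (a * ((n + 1 : ℕ) : ℝ) + b) * g (m + 1) := by
  unfold intervalPotential
  rw [sum_Icc_succ_top (by omega), sum_Icc_succ_top (by omega), sum_Icc_succ_top (by omega),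
    Nat.add_sub_cancel]
  push_cast
  ring

theorem nCount_eq_card_add_mCount (z : Fin N → R) (x : Fin M → R) (r : R) :
    nCount z x r = #{ℓ | z ℓ = r} + mCount x r :=
  rfl

variable [Fintype R] (ξc : Fin N → R → ℝ) (ξt : Fin M → R → ℝ)

theorem Phi_eq_sum_intervalPotential (x : Fin M → R) (z : Fin N → R) :
    Phi a b β g ξc ξt x z = (∑ i, ξc i (z i)) + (∑ j, ξt j (x j))
      + ∑ r, intervalPotential a b β g (nCount z x r) (mCount x r) := by
  simp only [Phi, intervalPotential, sum_add_distrib, sum_sub_distrib, mul_sum]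
  ring

theorem Phi_eq_carUtax_add (i : Fin N) (x : Fin M → R) (z : Fin N → R) :
    Phi a b β g ξc ξt x z = carUtax a b β g ξc i z x
      + ((∑ ℓ ∈ univ.erase i, ξc ℓ (z ℓ)) + (∑ j, ξt j (x j))
        + ∑ r, intervalPotential a b β g (#{ℓ ∈ univ.erase i | z ℓ = r} + mCount x r)
            (mCount x r)) := by
  have hn : nCount z x (z i) = #{ℓ ∈ univ.erase i | z ℓ = z i} + mCount x (z i) + 1 := by
    rw [nCount_eq_card_add_mCount, card_filter_eq_card_filter_erase_add z i, if_pos rfl,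
      Nat.add_right_comm]
  rw [Phi_eq_sum_intervalPotential, ← add_sum_erase _ _ (mem_univ i)]
  simp only [nCount_eq_card_add_mCount]
  rw [sum_apply_card_filter_eq_add
      (fun r k => intervalPotential a b β g (k + mCount x r) (mCount x r)) z i,
    Nat.add_right_comm _ 1, intervalPotential_succ_left, carUtax, hn]
  push_cast
  ring

theorem Phi_eq_truckU_add (j : Fin M) (x : Fin M → R) (z : Fin N → R) :
    Phi a b β g ξc ξt x z = truckU a b β g ξt j x z
      + ((∑ i, ξc i (z i)) + (∑ ℓ ∈ univ.erase j, ξt ℓ (x ℓ))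
        + ∑ r, intervalPotential a b β g (#{ℓ | z ℓ = r} + #{ℓ ∈ univ.erase j | x ℓ = r})
            #{ℓ ∈ univ.erase j | x ℓ = r}) := by
  have hm : mCount x (x j) = #{ℓ ∈ univ.erase j | x ℓ = x j} + 1 := by
    rw [mCount, card_filter_eq_card_filter_erase_add x j, if_pos rfl]
  rw [Phi_eq_sum_intervalPotential, ← add_sum_erase _ _ (mem_univ j)]
  simp only [nCount_eq_card_add_mCount]
  unfold mCount
  rw [sum_apply_card_filter_eq_add
      (fun r k => intervalPotential a b β g (#{ℓ | z ℓ = r} + k) k) x j,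
    ← add_assoc #{ℓ | z ℓ = x j}, intervalPotential_succ_succ, truckU, nCount_eq_card_add_mCount,
    hm]
  push_cast
  ring

end CarTruckGame

/-- under the car congestion tax, `Φ` is an exact potential function
for the car–truck congestion game. -/
theorem car_tax_gives_potential {R : Type*} [Fintype R] [DecidableEq R] {N M : ℕ}
    (a b β : ℝ) (g : ℕ → ℝ) (ξc : Fin N → R → ℝ) (ξt : Fin M → R → ℝ) :
    (∀ (i : Fin N) (z : Fin N → R) (x : Fin M → R) (c : R),
      Phi a b β g ξc ξt x z - Phi a b β g ξc ξt x (Function.update z i c)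
        = carUtax a b β g ξc i z x - carUtax a b β g ξc i (Function.update z i c) x) ∧
    (∀ (j : Fin M) (x : Fin M → R) (z : Fin N → R) (c : R),
      Phi a b β g ξc ξt x z - Phi a b β g ξc ξt (Function.update x j c) z
        = truckU a b β g ξt j x z - truckU a b β g ξt j (Function.update x j c) z) := by
  constructor
  · intro i z x c
    rw [Phi_eq_carUtax_add a b β g ξc ξt i, Phi_eq_carUtax_add a b β g ξc ξt i]
    simp only [filter_erase_update_eq, sum_erase_update_eq]
    ring
  · intro j x z c
    rw [Phi_eq_truckU_add a b β g ξc ξt j, Phi_eq_truckU_add a b β g ξc ξt j]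
    simp only [filter_erase_update_eq, sum_erase_update_eq]
    ring
end

section
/- Let each truck j receive the subsidy p_j^t(x,z) = β(v_0 − (a·n_{x_j}(z,x)+b))·g(m_{x_j}(x)), so that its total utility becomes V_j(x,z) = ξ_j^t(x_j) + (a·n_{x_j}(z,x)+b) + β·v_0·g(m_{x_j}(x)), while cars have utility U_i(z,x) = ξ_i^c(z_i) + (a·n_{z_i}(z,x)+b). Then Ψ(x,z) = Σ_i ξ_i^c(z_i) + Σ_j ξ_j^t(x_j) + Σ_{r∈R} Σ_{k=1}^{n_r(x,z)}(ak+b) + β·v_0·Σ_{r∈R} Σ_{ℓ=1}^{m_r(x)} g(ℓ) is an exact potential function for the game, and hence the game admits a pure strategy Nash equilibrium. -/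
/-- Car utility (no tax): `U_i(z,x) = ξ_i^c(z_i) + (a·n_{z_i}(z,x)+b)`. -/
def carU {R : Type*} [DecidableEq R] {N M : ℕ} (a b : ℝ)
    (ξc : Fin N → R → ℝ) (i : Fin N) (z : Fin N → R) (x : Fin M → R) : ℝ :=
  ξc i (z i) + (a * (nCount z x (z i) : ℝ) + b)

/-- Truck utility including the subsidy
`p_j^t(x,z) = β(v_0 − (a·n_{x_j}(z,x)+b))·g(m_{x_j}(x))`, which gives
`V_j(x,z) = ξ_j^t(x_j) + (a·n_{x_j}(z,x)+b) + β·v_0·g(m_{x_j}(x))`. -/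
def truckUsub {R : Type*} [DecidableEq R] {N M : ℕ} (a b β v0 : ℝ) (g : ℕ → ℝ)
    (ξt : Fin M → R → ℝ) (j : Fin M) (x : Fin M → R) (z : Fin N → R) : ℝ :=
  ξt j (x j) + (a * (nCount z x (x j) : ℝ) + b) + β * v0 * g (mCount x (x j))

/-- The candidate potential function of Theorem 2. -/
def Psi {R : Type*} [Fintype R] [DecidableEq R] {N M : ℕ} (a b β v0 : ℝ) (g : ℕ → ℝ)
    (ξc : Fin N → R → ℝ) (ξt : Fin M → R → ℝ)
    (x : Fin M → R) (z : Fin N → R) : ℝ :=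
  (∑ i, ξc i (z i)) + (∑ j, ξt j (x j))
    + (∑ r : R, ∑ k ∈ Finset.Icc 1 (nCount z x r), (a * (k : ℝ) + b))
    + β * v0 * ∑ r : R, ∑ ℓ ∈ Finset.Icc 1 (mCount x r), g ℓ

/-!
`Ψ` is the sum of the private terms and two Rosenthal potentials: one for the congestion
cost `a k + b` over all vehicles, and one, scaled by `β v₀`, for the platooning term `g` over
the trucks. When a single user moves from `s` to `t`, a Rosenthal potential changes by that
user's cost at `s` minus its cost at `t`, which is exactly the change of the corresponding
utility term. A maximiser of `Ψ` over the finite set of profiles is then a Nash equilibrium.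
-/

open Finset Function

section Update

variable {ι R M : Type*} [Fintype ι] [DecidableEq ι] [AddCommMonoid M]

theorem sum_apply_update_add (φ : ι → R → M) (f : ι → R) (i : ι) (c : R) :
    ∑ ℓ, φ ℓ (update f i c ℓ) + φ i (f i) = ∑ ℓ, φ ℓ (f ℓ) + φ i c := by
  have hφ : (fun ℓ => φ ℓ (update f i c ℓ)) = update (fun ℓ => φ ℓ (f ℓ)) i (φ i c) :=
    funext fun ℓ => apply_update φ f i c ℓ
  rw [hφ, sum_update_of_mem (mem_univ i),
    sum_eq_add_sum_sdiff_singleton_of_mem (mem_univ i) (fun ℓ => φ ℓ (f ℓ))]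
  ac_rfl

theorem card_filter_update_add [DecidableEq R] (f : ι → R) (i : ι) (c r : R) :
    #{ℓ | update f i c ℓ = r} + (if f i = r then 1 else 0)
      = #{ℓ | f ℓ = r} + if c = r then 1 else 0 := by
  simp only [card_filter]
  exact sum_apply_update_add (fun _ y => if y = r then 1 else 0) f i c

end Update

def rosenthalPotential {R M : Type*} [Fintype R] [AddCommMonoid M] (f : ℕ → M) (n : R → ℕ) :
    M :=
  ∑ r, ∑ k ∈ Icc 1 (n r), f k

section Rosenthal

variable {R M : Type*} [Fintype R] [DecidableEq R]

theorem rosenthalPotential_add_ite [AddCommMonoid M] (f : ℕ → M) (n : R → ℕ) (t : R) :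
    rosenthalPotential f (fun r => n r + if t = r then 1 else 0)
      = rosenthalPotential f n + f (n t + 1) := by
  have hr : ∀ r, ∑ k ∈ Icc 1 (n r + if t = r then 1 else 0), f k
      = ∑ k ∈ Icc 1 (n r), f k + if t = r then f (n t + 1) else 0 := by
    intro r
    split_ifs with h
    · subst h
      exact sum_Icc_succ_top (Nat.le_add_left 1 _) f
    · simp
  simp only [rosenthalPotential, hr, sum_add_distrib, sum_ite_eq, mem_univ, if_true]

/-- `hmove` says that the load vector `n'` arises from `n` by moving one user from `s` to `t`. -/
theorem rosenthalPotential_sub_of_move [AddCommGroup M] (f : ℕ → M) {n n' : R → ℕ} {s t : R}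
    (hst : s ≠ t) (hmove : ∀ r, n' r + (if s = r then 1 else 0) = n r + if t = r then 1 else 0) :
    rosenthalPotential f n - rosenthalPotential f n' = f (n s) - f (n' t) := by
  have hpot := congrArg (rosenthalPotential f) (funext hmove)
  rw [rosenthalPotential_add_ite, rosenthalPotential_add_ite] at hpot
  have hs := hmove s
  have ht := hmove t
  simp only [hst, hst.symm, if_true, if_false, add_zero] at hs ht
  rw [hs, ← ht] at hpot
  rw [sub_eq_sub_iff_add_eq_add, ← hpot, add_comm]

end Rosenthal

section CarTruckGame

variable {R : Type*} [DecidableEq R] {N M : ℕ}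

theorem nCount_update_left_add (z : Fin N → R) (x : Fin M → R) (i : Fin N) (c r : R) :
    nCount (update z i c) x r + (if z i = r then 1 else 0)
      = nCount z x r + if c = r then 1 else 0 := by
  have := card_filter_update_add z i c r
  unfold nCount
  omega

theorem nCount_update_right_add (z : Fin N → R) (x : Fin M → R) (j : Fin M) (c r : R) :
    nCount z (update x j c) r + (if x j = r then 1 else 0)
      = nCount z x r + if c = r then 1 else 0 := by
  have := card_filter_update_add x j c r
  unfold nCount
  omega

theorem mCount_update_add (x : Fin M → R) (j : Fin M) (c r : R) :
    mCount (update x j c) r + (if x j = r then 1 else 0)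
      = mCount x r + if c = r then 1 else 0 :=
  card_filter_update_add x j c r

theorem Psi_eq_rosenthalPotential [Fintype R] (a b β v0 : ℝ) (g : ℕ → ℝ) (ξc : Fin N → R → ℝ)
    (ξt : Fin M → R → ℝ) (x : Fin M → R) (z : Fin N → R) :
    Psi a b β v0 g ξc ξt x z = (∑ i, ξc i (z i)) + (∑ j, ξt j (x j))
      + rosenthalPotential (fun k => a * k + b) (nCount z x)
      + β * v0 * rosenthalPotential g (mCount x) :=
  rfl

theorem Psi_sub_update_car [Fintype R] (a b β v0 : ℝ) (g : ℕ → ℝ) (ξc : Fin N → R → ℝ)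
    (ξt : Fin M → R → ℝ) (i : Fin N) (z : Fin N → R) (x : Fin M → R) (c : R) :
    Psi a b β v0 g ξc ξt x z - Psi a b β v0 g ξc ξt x (update z i c)
      = carU a b ξc i z x - carU a b ξc i (update z i c) x := by
  rcases eq_or_ne c (z i) with rfl | hc
  · simp
  have hload := rosenthalPotential_sub_of_move (fun k => a * k + b) hc.symm
    (nCount_update_left_add z x i c)
  simp only [Psi_eq_rosenthalPotential, carU, update_self] at hload ⊢
  linear_combination hload - sum_apply_update_add ξc z i c

theorem Psi_sub_update_truck [Fintype R] (a b β v0 : ℝ) (g : ℕ → ℝ) (ξc : Fin N → R → ℝ)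
    (ξt : Fin M → R → ℝ) (j : Fin M) (x : Fin M → R) (z : Fin N → R) (c : R) :
    Psi a b β v0 g ξc ξt x z - Psi a b β v0 g ξc ξt (update x j c) z
      = truckUsub a b β v0 g ξt j x z - truckUsub a b β v0 g ξt j (update x j c) z := by
  rcases eq_or_ne c (x j) with rfl | hc
  · simp
  have hload := rosenthalPotential_sub_of_move (fun k => a * k + b) hc.symm
    (nCount_update_right_add z x j c)
  have hplatoon := rosenthalPotential_sub_of_move g hc.symm (mCount_update_add x j c)
  simp only [Psi_eq_rosenthalPotential, truckUsub, update_self] at hload ⊢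
  linear_combination hload + β * v0 * hplatoon - sum_apply_update_add ξt x j c

end CarTruckGame

/-- under the truck platooning subsidy, `Ψ` is an exact potential
function for the car–truck congestion game, and hence the game admits a pure
strategy Nash equilibrium. -/
theorem subsidy_gives_potential_and_nash {R : Type*} [Fintype R] [DecidableEq R]
    [Nonempty R] {N M : ℕ} (a b β v0 : ℝ) (g : ℕ → ℝ)
    (ξc : Fin N → R → ℝ) (ξt : Fin M → R → ℝ) :
    ((∀ (i : Fin N) (z : Fin N → R) (x : Fin M → R) (c : R),
        Psi a b β v0 g ξc ξt x z - Psi a b β v0 g ξc ξt x (Function.update z i c)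
          = carU a b ξc i z x - carU a b ξc i (Function.update z i c) x) ∧
      (∀ (j : Fin M) (x : Fin M → R) (z : Fin N → R) (c : R),
        Psi a b β v0 g ξc ξt x z - Psi a b β v0 g ξc ξt (Function.update x j c) z
          = truckUsub a b β v0 g ξt j x z
            - truckUsub a b β v0 g ξt j (Function.update x j c) z)) ∧
    (∃ (z : Fin N → R) (x : Fin M → R),
      (∀ (i : Fin N) (c : R),
        carU a b ξc i (Function.update z i c) x ≤ carU a b ξc i z x) ∧
      (∀ (j : Fin M) (c : R),
        truckUsub a b β v0 g ξt j (Function.update x j c) z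
          ≤ truckUsub a b β v0 g ξt j x z)) := by
  refine ⟨⟨Psi_sub_update_car a b β v0 g ξc ξt, Psi_sub_update_truck a b β v0 g ξc ξt⟩, ?_⟩
  obtain ⟨⟨z, x⟩, hmax⟩ := Finite.exists_max
    (fun p : (Fin N → R) × (Fin M → R) => Psi a b β v0 g ξc ξt p.2 p.1)
  refine ⟨z, x, fun i c => ?_, fun j c => ?_⟩
  · have := hmax (update z i c, x)
    linarith [Psi_sub_update_car a b β v0 g ξc ξt i z x c]
  · have := hmax (z, update x j c)
    linarith [Psi_sub_update_truck a b β v0 g ξc ξt j x z c]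
end
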